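/- Let H be the Heisenberg group of real 3×3 upper unitriangular matrices, and define f : H → ℝ by f(g) = a_g b_g - 2c_g where a_g, b_g, c_g are the (1,2), (2,3), (1,3) entries of g. Then Δ_h² f = 0 for every h ∈ H, but there exist h, p ∈ H with Δ_p Δ_h f ≠ 0. -/
import Mathlib


/-- The Heisenberg group of real 3×3 upper unitriangular matrices, recorded by
its entries `a` in position (1,2), `b` in position (2,3), `c` in position (1,3). -/
@[ext] structure Heis where
  a : ℝ
  b : ℝ
  c : ℝ

namespace Heis

instance : Mul Heis := ⟨fun g h => ⟨g.a + h.a, g.b + h.b, g.c + h.c + g.a * h.b⟩⟩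
instance : One Heis := ⟨⟨0, 0, 0⟩⟩
instance : Inv Heis := ⟨fun g => ⟨-g.a, -g.b, g.a * g.b - g.c⟩⟩

@[simp] lemma mul_a (g h : Heis) : (g * h).a = g.a + h.a := rfl
@[simp] lemma mul_b (g h : Heis) : (g * h).b = g.b + h.b := rfl
@[simp] lemma mul_c (g h : Heis) : (g * h).c = g.c + h.c + g.a * h.b := rfl
@[simp] lemma one_a : (1 : Heis).a = 0 := rfl
@[simp] lemma one_b : (1 : Heis).b = 0 := rfl
@[simp] lemma one_c : (1 : Heis).c = 0 := rfl
@[simp] lemma inv_a (g : Heis) : g⁻¹.a = -g.a := rfl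
@[simp] lemma inv_b (g : Heis) : g⁻¹.b = -g.b := rfl
@[simp] lemma inv_c (g : Heis) : g⁻¹.c = g.a * g.b - g.c := rfl

instance : Group Heis where
  mul_assoc g h k := by ext <;> simp <;> ring
  one_mul g := by ext <;> simp
  mul_one g := by ext <;> simp
  inv_mul_cancel g := by ext <;> simp <;> ring

end Heis

/-- The right difference operator: `(Δ h f)(g) = f(gh) - f(g)`. -/
def Δ (h : Heis) (f : Heis → ℝ) : Heis → ℝ :=
  fun g => f (g * h) - f g

theorem stmt15 :
    (∀ h : Heis, Δ h (Δ h (fun g => g.a * g.b - 2 * g.c)) = 0) ∧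
    (∃ h p : Heis, Δ p (Δ h (fun g => g.a * g.b - 2 * g.c)) ≠ 0) := by
  constructor
  · intro h
    funext g
    simp [Δ]; ring
  · refine ⟨⟨1,0,0⟩, ⟨0,1,0⟩, fun hc => ?_⟩
    have := congrFun hc 1
    simp [Δ] at this
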